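/- The number of solvable sorting match puzzles of order n ≥ 2 equals 4·2^n − 4 + 2(n−1)². -/

import Mathlib

/-- A solution of the sorting match puzzle `(r, c)` of order `n`:
a bijective filling of the grid respecting all row and column labels. -/
def IsSolution (n : ℕ) (r c : Fin n → Bool) (g : Fin n × Fin n → Fin (n ^ 2)) : Prop :=
  Function.Bijective g ∧
  (∀ i : Fin n, if r i = true then StrictMono (fun j => g (i, j))
                else StrictAnti (fun j => g (i, j))) ∧
  (∀ j : Fin n, if c j = true then StrictMono (fun i => g (i, j))
                else StrictAnti (fun i => g (i, j)))

/-- Solvability of the sorting match puzzle `(r, c)`. -/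
def Solvable (n : ℕ) (r c : Fin n → Bool) : Prop :=
  ∃ g : Fin n × Fin n → Fin (n ^ 2), IsSolution n r c g

/-!
A puzzle is solvable as soon as the grid carries a labelling by some linear order that runs along
every row and column in the prescribed direction: ranking the labels gives the bijection onto
`Fin (n ^ 2)`. For constant `r` the lexicographic key `(±j, ±i)` works; when `r` and `c` are both
of the form `A^k D^{n-k}` (antitone, as `A = true > false = D`), the key `(r i xor c j, ±i ± j)`
does. Transposing the grid swaps `r` and `c`, and reversing the numbering negates all labels,
which covers the remaining cases.

Conversely, rows `i < i'` labelled `D, A` and columns `j < j'` labelled `A, D` would force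
`g (i, j') < g (i, j) < g (i', j) < g (i', j') < g (i, j')`. So in a solvable puzzle `r` is
antitone or `c` is monotone, and by transposition `r` is monotone or `c` is antitone; distributing
gives the four cases. There are `n + 1` monotone and `n + 1` antitone labellings, and exactly two
(the constant ones) are both.
-/

open Finset

def StrictMonoIf {α β : Type*} [Preorder α] [Preorder β] (b : Bool) (f : α → β) : Prop :=
  if b = true then StrictMono f else StrictAnti f

namespace StrictMonoIf

variable {α β γ : Type*} [Preorder α] [Preorder β] [Preorder γ] {b : Bool} {f : α → β}
  {g : α → γ}

theorem of_lt_imp (hf : StrictMonoIf b f) (hg : ∀ x y, f x < f y → g x < g y) :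
    StrictMonoIf b g := by
  cases b
  · exact fun x y h => hg _ _ (hf h)
  · exact fun x y h => hg _ _ (hf h)

theorem not_of_lt_imp (hf : StrictMonoIf b f) (hg : ∀ x y, f x < f y → g y < g x) :
    StrictMonoIf (!b) g := by
  cases b
  · exact fun x y h => hg _ _ (hf h)
  · exact fun x y h => hg _ _ (hf h)

end StrictMonoIf

def signed (b : Bool) (k : ℕ) : ℤ := if b then k else -k

theorem strictMonoIf_signed {n : ℕ} (b : Bool) : StrictMonoIf b fun i : Fin n => signed b i := by
  cases b <;> intro i j hij <;> simp only [signed, Bool.false_eq_true, if_false, if_true] <;> omega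

theorem Monotone.not {α : Type*} [Preorder α] {f : α → Bool} (hf : Monotone f) :
    Antitone fun a => !f a :=
  (compl_antitone Bool).comp_monotone hf

theorem Antitone.not {α : Type*} [Preorder α] {f : α → Bool} (hf : Antitone f) :
    Monotone fun a => !f a :=
  (compl_antitone Bool).comp hf

theorem exists_lt_of_not_monotone {α β : Type*} [PartialOrder α] [LinearOrder β] {f : α → β}
    (hf : ¬Monotone f) : ∃ a b, a < b ∧ f b < f a := by
  simp only [Monotone, not_forall, not_le] at hf
  obtain ⟨a, b, hab, hlt⟩ := hf
  exact ⟨a, b, hab.lt_of_ne (by rintro rfl; exact hlt.false), hlt⟩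

theorem exists_equiv_fin_lt_iff {ι α : Type*} [Fintype ι] [LinearOrder α] {m : ℕ}
    (hm : Fintype.card ι = m) {f : ι → α} (hf : Function.Injective f) :
    ∃ e : ι ≃ Fin m, ∀ p q, e p < e q ↔ f p < f q := by
  let o := Fintype.orderIsoFinOfCardEq (Set.range f) ((Set.card_range_of_injective hf).trans hm)
  exact ⟨(Equiv.ofInjective f hf).trans o.symm.toEquiv, fun p q => o.symm.lt_iff_lt⟩

theorem Monotone.eq_threshold {n : ℕ} {f : Fin n → Bool} (hf : Monotone f) :
    f = fun i : Fin n => decide (#{j | f j = false} ≤ (i : ℕ)) := by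
  funext i
  cases hi : f i
  · have hsub : Iic i ⊆ ({j | f j = false} : Finset (Fin n)) := fun j hj => by
      simpa [hi, Bool.le_iff_imp] using hf (mem_Iic.1 hj)
    have := card_le_card hsub
    rw [Fin.card_Iic] at this
    simp only [Bool.false_eq, decide_eq_false_iff_not, not_le]
    omega
  · have hsub : ({j | f j = false} : Finset (Fin n)) ⊆ Iio i := fun j hj => by
      rw [mem_filter] at hj
      rw [mem_Iio]
      by_contra! hij
      simpa [hi, hj.2, Bool.le_iff_imp] using hf hij
    simpa [Fin.card_Iio] using card_le_card hsub

theorem card_monotone_fin_bool (n : ℕ) : #{f : Fin n → Bool | Monotone f} = n + 1 := by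
  have himage : ({f | Monotone f} : Finset (Fin n → Bool)) =
      (range (n + 1)).image fun (k : ℕ) (i : Fin n) => decide (k ≤ (i : ℕ)) := by
    ext f
    simp only [mem_filter, mem_univ, true_and, mem_image, mem_range]
    constructor
    · intro hf
      refine ⟨_, Nat.lt_succ_of_le ?_, hf.eq_threshold.symm⟩
      simpa using card_le_univ ({j | f j = false} : Finset (Fin n))
    · rintro ⟨k, -, rfl⟩ i j hij
      simpa [Bool.le_iff_imp] using fun h : k ≤ i => h.trans hij
  rw [himage, card_image_of_injOn, card_range]
  intro k hk k' hk' h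
  simp only [coe_range, Set.mem_Iio] at hk hk'
  by_contra hne
  rcases Nat.lt_or_gt_of_ne hne with hlt | hlt
  · have := congrFun h ⟨k, by omega⟩
    simp only [le_refl, decide_true, true_eq_decide_iff] at this
    omega
  · have := congrFun h ⟨k', by omega⟩
    simp only [le_refl, decide_true, decide_eq_true_eq] at this
    omega

theorem card_antitone_fin_bool (n : ℕ) : #{f : Fin n → Bool | Antitone f} = n + 1 := by
  rw [← card_monotone_fin_bool n]
  refine card_nbij' (fun f i => !f i) (fun f i => !f i) (fun f hf => ?_) (fun f hf => ?_)
    (fun f _ => by simp) (fun f _ => by simp)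
  · exact mem_filter.2 ⟨mem_univ _, (mem_filter.1 hf).2.not⟩
  · exact mem_filter.2 ⟨mem_univ _, (mem_filter.1 hf).2.not⟩

theorem card_monotone_antitone_fin_bool {n : ℕ} (hn : n ≠ 0) :
    #{f : Fin n → Bool | Monotone f ∧ Antitone f} = 2 := by
  have : NeZero n := ⟨hn⟩
  have himage : ({f | Monotone f ∧ Antitone f} : Finset (Fin n → Bool)) =
      univ.image (Function.const (Fin n)) := by
    ext f
    simp only [mem_filter, mem_univ, true_and, mem_image]
    constructor
    · rintro ⟨hf, hf'⟩
      exact ⟨f 0, funext fun i => le_antisymm (hf (Fin.zero_le i)) (hf' (Fin.zero_le i))⟩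
    · rintro ⟨b, -, rfl⟩
      exact ⟨monotone_const, antitone_const⟩
  rw [himage, card_image_of_injective _ Function.const_injective, card_univ, Fintype.card_bool]

theorem card_filter_pairs_mem_inter_or_both_mem {α : Type*} [Fintype α] [DecidableEq α]
    (M A : Finset α) :
    #{p : α × α | p.1 ∈ M ∩ A ∨ p.2 ∈ M ∩ A ∨ (p.1 ∈ A ∧ p.2 ∈ A) ∨ (p.1 ∈ M ∧ p.2 ∈ M)} +
      #(M ∩ A) ^ 2 = 2 * #(M ∩ A) * Fintype.card α + #(M \ A) ^ 2 + #(A \ M) ^ 2 := by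
  set C := M ∩ A
  have hsplit : ({p : α × α | p.1 ∈ C ∨ p.2 ∈ C ∨ (p.1 ∈ A ∧ p.2 ∈ A) ∨ (p.1 ∈ M ∧ p.2 ∈ M)} :
      Finset (α × α)) = (C ×ˢ univ ∪ univ ×ˢ C) ∪ ((M \ A) ×ˢ (M \ A) ∪ (A \ M) ×ˢ (A \ M)) := by
    ext p
    simp only [C, mem_filter, mem_univ, true_and, mem_union, mem_product, mem_inter, mem_sdiff]
    tauto
  have hdisj : Disjoint (C ×ˢ univ ∪ univ ×ˢ C) ((M \ A) ×ˢ (M \ A) ∪ (A \ M) ×ˢ (A \ M)) := by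
    simp only [disjoint_left, C, mem_union, mem_product, mem_inter, mem_sdiff, mem_univ]
    tauto
  have hdisj' : Disjoint ((M \ A) ×ˢ (M \ A)) ((A \ M) ×ˢ (A \ M)) :=
    disjoint_product.2 (Or.inl disjoint_sdiff_sdiff)
  have hcorner := card_union_add_card_inter (C ×ˢ univ) (univ ×ˢ C)
  rw [product_inter_product, inter_univ, univ_inter] at hcorner
  rw [hsplit, card_union_of_disjoint hdisj, card_union_of_disjoint hdisj']
  simp only [card_product, card_univ] at hcorner ⊢
  linarith

section Puzzle

variable {n : ℕ} {r c : Fin n → Bool}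

theorem solvable_of_strictMonoIf {α : Type*} [LinearOrder α] (f : Fin n × Fin n → α)
    (hrow : ∀ i, StrictMonoIf (r i) fun j => f (i, j))
    (hcol : ∀ j, StrictMonoIf (c j) fun i => f (i, j)) : Solvable n r c := by
  -- the position breaks ties, so `f` need not be injective
  obtain ⟨e, he⟩ := exists_equiv_fin_lt_iff (m := n ^ 2) (by simp [sq])
    (f := fun p => toLex (f p, toLex p))
    fun p q h => by simpa using congrArg (fun x => (ofLex x).2) h
  have hlt : ∀ p q, f p < f q → e p < e q :=
    fun p q h => (he p q).2 (Prod.Lex.toLex_lt_toLex.2 (Or.inl h))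
  exact ⟨e, e.bijective, fun i => (hrow i).of_lt_imp fun _ _ => hlt _ _,
    fun j => (hcol j).of_lt_imp fun _ _ => hlt _ _⟩

theorem Solvable.swap (h : Solvable n r c) : Solvable n c r := by
  obtain ⟨g, hg, hrow, hcol⟩ := h
  exact ⟨g ∘ Prod.swap, hg.comp Prod.swap_bijective, hcol, hrow⟩

theorem Solvable.map_not (h : Solvable n r c) : Solvable n (fun i => !r i) (fun j => !c j) := by
  obtain ⟨g, hg, hrow, hcol⟩ := h
  exact ⟨Fin.rev ∘ g, Fin.rev_bijective.comp hg,
    fun i => StrictMonoIf.not_of_lt_imp (hrow i) fun _ _ => Fin.rev_lt_rev.2,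
    fun j => StrictMonoIf.not_of_lt_imp (hcol j) fun _ _ => Fin.rev_lt_rev.2⟩

theorem solvable_of_monotone_of_antitone (hr : Monotone r) (hr' : Antitone r) :
    Solvable n r c := by
  have hconst : ∀ i i', r i = r i' := fun i i' => (le_total i i').elim
    (fun h => le_antisymm (hr h) (hr' h)) (fun h => le_antisymm (hr' h) (hr h))
  refine solvable_of_strictMonoIf (fun p => toLex (signed (r p.1) p.2, signed (c p.2) p.1))
    (fun i => (strictMonoIf_signed (r i)).of_lt_imp fun _ _ h => ?_)
    (fun j => (strictMonoIf_signed (c j)).of_lt_imp fun i i' h => ?_)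
  · exact Prod.Lex.toLex_lt_toLex.2 (Or.inl h)
  · exact Prod.Lex.toLex_lt_toLex.2 (Or.inr ⟨by rw [hconst i i'], h⟩)

theorem solvable_of_antitone (hr : Antitone r) (hc : Antitone c) : Solvable n r c := by
  refine solvable_of_strictMonoIf
    (fun p => toLex (r p.1 ^^ c p.2, signed (c p.2) p.1 + signed (r p.1) p.2))
    (fun i => ?_) (fun j => ?_) <;> unfold StrictMonoIf
  · split_ifs <;> intro j j' hjj <;> have := hc hjj.le
    all_goals cases hcj : c j <;> cases hcj' : c j' <;>
      simp_all [signed, Prod.Lex.toLex_lt_toLex, Bool.le_iff_imp] <;> omega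
  · split_ifs <;> intro i i' hii <;> have := hr hii.le
    all_goals cases hri : r i <;> cases hri' : r i' <;>
      simp_all [signed, Prod.Lex.toLex_lt_toLex, Bool.le_iff_imp] <;> omega

theorem Solvable.antitone_or_monotone (h : Solvable n r c) : Antitone r ∨ Monotone c := by
  by_contra! hrc
  obtain ⟨i, i', hii, hri⟩ := exists_lt_of_not_monotone (β := Boolᵒᵈ) hrc.1
  obtain ⟨j, j', hjj, hcj⟩ := exists_lt_of_not_monotone hrc.2
  obtain ⟨hri, hri'⟩ := Bool.lt_iff.1 (show r i < r i' from hri)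
  obtain ⟨hcj', hcj⟩ := Bool.lt_iff.1 hcj
  obtain ⟨g, -, hrow, hcol⟩ := h
  have hi : StrictAnti fun j => g (i, j) := by simpa [hri] using hrow i
  have hi' : StrictMono fun j => g (i', j) := by simpa [hri'] using hrow i'
  have hj : StrictMono fun i => g (i, j) := by simpa [hcj] using hcol j
  have hj' : StrictAnti fun i => g (i, j') := by simpa [hcj'] using hcol j'
  exact lt_irrefl _ <|
    calc g (i, j') < g (i, j) := hi hjj
      _ < g (i', j) := hj hii
      _ < g (i', j') := hi' hjj
      _ < g (i, j') := hj' hii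

theorem solvable_iff : Solvable n r c ↔ (Monotone r ∧ Antitone r) ∨ (Monotone c ∧ Antitone c) ∨
    (Antitone r ∧ Antitone c) ∨ (Monotone r ∧ Monotone c) := by
  constructor
  · intro h
    have := h.antitone_or_monotone
    have := h.swap.antitone_or_monotone
    tauto
  · rintro (⟨hr, hr'⟩ | ⟨hc, hc'⟩ | ⟨hr, hc⟩ | ⟨hr, hc⟩)
    · exact solvable_of_monotone_of_antitone hr hr'
    · exact (solvable_of_monotone_of_antitone hc hc').swap
    · exact solvable_of_antitone hr hc
    · simpa using (solvable_of_antitone hr.not hc.not).map_not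

end Puzzle

/-- The number of solvable sorting match puzzles of order `n ≥ 2`. -/
theorem card_solvable_puzzles (n : ℕ) (hn : 2 ≤ n) :
    Nat.card {p : (Fin n → Bool) × (Fin n → Bool) // Solvable n p.1 p.2} =
      4 * 2 ^ n - 4 + 2 * (n - 1) ^ 2 := by
  classical
  set M : Finset (Fin n → Bool) := {f | Monotone f}
  set A : Finset (Fin n → Bool) := {f | Antitone f}
  have hMA : #(M ∩ A) = 2 := by
    rw [← filter_and]
    exact card_monotone_antitone_fin_bool (by omega)
  have hM : #(M \ A) = n - 1 := by
    rw [card_sdiff, inter_comm, hMA, card_monotone_fin_bool]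
    omega
  have hA : #(A \ M) = n - 1 := by
    rw [card_sdiff, hMA, card_antitone_fin_bool]
    omega
  have hcount := card_filter_pairs_mem_inter_or_both_mem M A
  rw [hMA, hM, hA, Fintype.card_fun, Fintype.card_bool, Fintype.card_fin] at hcount
  rw [Nat.card_eq_fintype_card, Fintype.card_subtype]
  have hsolv : #{p : (Fin n → Bool) × (Fin n → Bool) | Solvable n p.1 p.2} =
      #{p : (Fin n → Bool) × (Fin n → Bool) |
        p.1 ∈ M ∩ A ∨ p.2 ∈ M ∩ A ∨ (p.1 ∈ A ∧ p.2 ∈ A) ∨ (p.1 ∈ M ∧ p.2 ∈ M)} := by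
    congr 1
    ext p
    simp [M, A, solvable_iff]
  have := Nat.one_le_two_pow (n := n)
  omega
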